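/- arXiv:2312.17369 — 5 statements merged into one kernel-verified Lean document; each statement's English description precedes it below -/
import Mathlib

section
/- For a convex differentiable function f: ℝ^d → ℝ with minimizer w*, one gradient step with Polyak step-size γ_t = (f(w_t) - f(w*))/‖∇f(w_t)‖² satisfies ‖w_{t+1} - w*‖² ≤ ‖w_t - w*‖² - (f(w_t) - f(w*))²/‖∇f(w_t)‖². -/
open InnerProductSpace

/-- First-order condition for convex functions: the gradient inequality. -/
lemma convex_grad_ineq {d : ℕ} (f : EuclideanSpace ℝ (Fin d) → ℝ)
    (hconv : ConvexOn ℝ Set.univ f) (x g y : EuclideanSpace ℝ (Fin d))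
    (hgrad : HasGradientAt f g x) :
    f x + inner ℝ g (y - x) ≤ f y := by
  set v := y - x with hv
  have hc : HasDerivAt (fun t : ℝ => x + t • v) v 0 := by
    simpa using ((hasDerivAt_id (0:ℝ)).smul_const v).const_add x
  have hφ : HasDerivAt (fun t : ℝ => f (x + t • v)) (inner ℝ g v : ℝ) 0 := by
    have hF := hgrad.hasFDerivAt
    rw [show x = x + (0:ℝ) • v by simp] at hF
    have h := hF.comp_hasDerivAt 0 hc
    simp at h
    exact h
  have hslope := hasDerivAt_iff_tendsto_slope.mp hφ
  have hslope' : Filter.Tendsto (slope (fun t : ℝ => f (x + t • v)) 0)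
      (nhdsWithin 0 (Set.Ioi 0)) (nhds (inner ℝ g v : ℝ)) :=
    hslope.mono_left (nhdsWithin_mono _ (fun t ht => ne_of_gt ht))
  have hbound : ∀ᶠ t in nhdsWithin (0:ℝ) (Set.Ioi 0),
      slope (fun t : ℝ => f (x + t • v)) 0 t ≤ f y - f x := by
    filter_upwards [Ioo_mem_nhdsGT_of_mem (by norm_num : (0:ℝ) ∈ Set.Ico (0:ℝ) 1)]
      with t ht
    have ht0 : 0 < t := ht.1
    have ht1 : t < 1 := ht.2
    have hcv := hconv.2 (Set.mem_univ x) (Set.mem_univ y)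
      (by linarith : (0:ℝ) ≤ 1 - t) (le_of_lt ht0) (by ring)
    have hxt : x + t • v = (1 - t) • x + t • y := by
      rw [hv]; module
    rw [slope_def_field]
    have : f (x + t • v) ≤ (1 - t) * f x + t * f y := by
      rw [hxt]; simpa [smul_eq_mul] using hcv
    simp only [sub_zero, zero_smul, add_zero]
    rw [div_le_iff₀ ht0]
    nlinarith
  have := le_of_tendsto hslope' hbound
  linarith

/-- For convex differentiable `f` with minimizer `w*`, one gradient step with
the Polyak step-size `γ_t = (f(w_t) - f(w*))/‖∇f(w_t)‖²` satisfies
`‖w_{t+1} - w*‖² ≤ ‖w_t - w*‖² - (f(w_t) - f(w*))²/‖∇f(w_t)‖²`. -/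
theorem polyak_step_decrease {d : ℕ}
    (f : EuclideanSpace ℝ (Fin d) → ℝ) (hconv : ConvexOn ℝ Set.univ f)
    (wstar wt wnext : EuclideanSpace ℝ (Fin d)) (hmin : ∀ w, f wstar ≤ f w)
    (g : EuclideanSpace ℝ (Fin d)) (hgrad : HasGradientAt f g wt) (hg : g ≠ 0)
    (hstep : wnext = wt - ((f wt - f wstar) / ‖g‖ ^ 2) • g) :
    ‖wnext - wstar‖ ^ 2 ≤ ‖wt - wstar‖ ^ 2 - (f wt - f wstar) ^ 2 / ‖g‖ ^ 2 := by
  set Δ : ℝ := f wt - f wstar with hΔ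
  have hΔ0 : 0 ≤ Δ := sub_nonneg.mpr (hmin wt)
  have hgn : (0:ℝ) < ‖g‖ ^ 2 := pow_pos (norm_pos_iff.mpr hg) 2
  set γ : ℝ := Δ / ‖g‖ ^ 2 with hγ
  have hγ0 : 0 ≤ γ := div_nonneg hΔ0 hgn.le
  have hkey : Δ ≤ inner ℝ g (wt - wstar) := by
    have := convex_grad_ineq f hconv wt g wstar hgrad
    have h2 : (inner ℝ g (wstar - wt) : ℝ) = - inner ℝ g (wt - wstar) := by
      rw [← inner_neg_right]; congr 1; abel
    rw [h2] at this
    linarith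
  have hexp : ‖wnext - wstar‖ ^ 2
      = ‖wt - wstar‖ ^ 2 - 2 * γ * inner ℝ g (wt - wstar) + γ ^ 2 * ‖g‖ ^ 2 := by
    have : wnext - wstar = (wt - wstar) - γ • g := by rw [hstep]; abel
    rw [this, norm_sub_sq_real, real_inner_smul_right, norm_smul,
      real_inner_comm (wt - wstar) g, Real.norm_eq_abs, abs_of_nonneg hγ0]
    ring
  have hq : γ ^ 2 * ‖g‖ ^ 2 = Δ ^ 2 / ‖g‖ ^ 2 := by
    rw [hγ]; field_simp
  have h2γ : 2 * γ * Δ ≤ 2 * γ * inner ℝ g (wt - wstar) := by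
    apply mul_le_mul_of_nonneg_left hkey (by linarith)
  have hγΔ : γ * Δ = Δ ^ 2 / ‖g‖ ^ 2 := by rw [hγ]; field_simp
  rw [hexp, hq]
  nlinarith [hγΔ, h2γ]
end

section
/- Let B ∈ ℝ^{d×d} be symmetric positive definite, m ∈ ℝ^d nonzero, and f_t ≥ f*. Consider min_w (1/2)‖w - w_t‖²_B subject to f_t + ⟨m, w - w_t⟩ + (1/2)⟨B(w - w_t), w - w_t⟩ ≤ f*. If υ := 2(f_t - f*)/⟨m, B⁻¹m⟩ ≤ 1, the constraint is feasible and the solution is w_{t+1} = w_t - λ B⁻¹ m with λ = 1 - √(1 - υ). -/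
open Matrix


private lemma sania_scalar_aux (c υ s2 a : ℝ) (hc : 0 < c) (hυ0 : 0 ≤ υ) (hυ1 : υ ≤ 1)
    (hCS : a ^ 2 ≤ c * s2) (hs2nn : 0 ≤ s2) (hcon2 : c * υ / 2 + s2 / 2 ≤ -a) :
    (1 - Real.sqrt (1 - υ)) ^ 2 * c ≤ s2 := by
  have h1υ : 0 ≤ 1 - υ := by linarith
  have hsq : Real.sqrt (1 - υ) ^ 2 = 1 - υ := Real.sq_sqrt h1υ
  have hsqnn : 0 ≤ Real.sqrt (1 - υ) := Real.sqrt_nonneg _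
  have hsq1 : Real.sqrt (1 - υ) ≤ 1 := Real.sqrt_le_one.mpr (by linarith)
  set s : ℝ := Real.sqrt s2 with hs
  have hsnn : 0 ≤ s := Real.sqrt_nonneg _
  have hss : s ^ 2 = s2 := Real.sq_sqrt hs2nn
  have hcnn : 0 ≤ Real.sqrt c := Real.sqrt_nonneg _
  have hcc : Real.sqrt c ^ 2 = c := Real.sq_sqrt hc.le
  have hna : -a ≤ Real.sqrt c * s := by
    nlinarith [sq_nonneg (Real.sqrt c * s + a), sq_nonneg (Real.sqrt c * s - a),
      mul_nonneg hcnn hsnn]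
  have hkey : s ^ 2 - 2 * Real.sqrt c * s + c * υ ≤ 0 := by nlinarith
  have h5 : (s - Real.sqrt c) ^ 2 ≤ (Real.sqrt c * Real.sqrt (1 - υ)) ^ 2 := by
    nlinarith [hkey, hcc, hsq]
  have h6 : -(Real.sqrt c * Real.sqrt (1 - υ)) ≤ s - Real.sqrt c := by
    nlinarith [mul_nonneg hcnn hsqnn,
      sq_nonneg (s - Real.sqrt c + Real.sqrt c * Real.sqrt (1 - υ))]
  have hslb : Real.sqrt c * (1 - Real.sqrt (1 - υ)) ≤ s := by nlinarith
  have hfin : (Real.sqrt c * (1 - Real.sqrt (1 - υ))) ^ 2 ≤ s ^ 2 := by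
    nlinarith [mul_nonneg hcnn (by linarith : 0 ≤ 1 - Real.sqrt (1 - υ))]
  nlinarith [hfin, hcc, hss]

/-- SANIA Quasi-Newton explicit step. If
`υ = 2(f_t - f*)/⟨m, B⁻¹m⟩ ≤ 1` then the constraint
`f_t + ⟨m, w - w_t⟩ + (1/2)⟨B(w - w_t), w - w_t⟩ ≤ f*` is feasible and the solution of
`min_w (1/2)‖w - w_t‖²_B` over it is `w_{t+1} = w_t - λ B⁻¹m` with `λ = 1 - √(1 - υ)`. -/
theorem sania_quasi_newton_step {d : ℕ} (B : Matrix (Fin d) (Fin d) ℝ)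
    (hB : B.PosDef) (hBsymm : B.IsSymm)
    (wt m : Fin d → ℝ) (hm : m ≠ 0) (ft fstar : ℝ) (hge : fstar ≤ ft)
    (υ lam : ℝ) (hυ : υ = 2 * (ft - fstar) / (m ⬝ᵥ B⁻¹.mulVec m)) (hυ1 : υ ≤ 1)
    (hlam : lam = 1 - Real.sqrt (1 - υ))
    (wnext : Fin d → ℝ) (hw : wnext = wt - lam • B⁻¹.mulVec m) :
    (ft + m ⬝ᵥ (wnext - wt) + (1 / 2) * (B.mulVec (wnext - wt) ⬝ᵥ (wnext - wt)) ≤ fstar) ∧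
      ∀ w : Fin d → ℝ,
        ft + m ⬝ᵥ (w - wt) + (1 / 2) * (B.mulVec (w - wt) ⬝ᵥ (w - wt)) ≤ fstar →
          (1 / 2) * (B.mulVec (wnext - wt) ⬝ᵥ (wnext - wt))
            ≤ (1 / 2) * (B.mulVec (w - wt) ⬝ᵥ (w - wt)) := by
  set u : Fin d → ℝ := B⁻¹.mulVec m with hu
  set c : ℝ := m ⬝ᵥ u with hc_def
  have hc : 0 < c := hB.inv.dotProduct_mulVec_pos hm
  have hBu : B.mulVec u = m := by
    rw [hu, mulVec_mulVec, Matrix.mul_nonsing_inv B (isUnit_iff_ne_zero.mpr hB.det_pos.ne'),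
      one_mulVec]
  -- symmetry of the bilinear form
  have hsymm : ∀ x y : Fin d → ℝ, B.mulVec x ⬝ᵥ y = x ⬝ᵥ B.mulVec y := by
    intro x y
    calc B *ᵥ x ⬝ᵥ y = x ᵥ* Bᵀ ⬝ᵥ y := by rw [vecMul_transpose]
      _ = x ᵥ* B ⬝ᵥ y := by rw [hBsymm.eq]
      _ = x ⬝ᵥ B *ᵥ y := (dotProduct_mulVec x B y).symm
  -- facts about υ and lam
  have hυ0 : 0 ≤ υ := by
    rw [hυ]; exact div_nonneg (by linarith) hc.le
  have h1υ : 0 ≤ 1 - υ := by linarith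
  have hsq : Real.sqrt (1 - υ) ^ 2 = 1 - υ := Real.sq_sqrt h1υ
  have hsqnn : 0 ≤ Real.sqrt (1 - υ) := Real.sqrt_nonneg _
  have hlam0 : 0 ≤ lam := by
    have h := Real.sqrt_le_one.mpr (show (1:ℝ) - υ ≤ 1 by linarith)
    rw [hlam]; linarith
  have hftfs : ft - fstar = υ * c / 2 := by
    rw [hυ]; field_simp
  -- compute the step quantities
  have hstep : wnext - wt = (-lam) • u := by rw [hw]; module
  have hmv : m ⬝ᵥ (wnext - wt) = -lam * c := by
    rw [hstep, dotProduct_smul, hc_def, smul_eq_mul]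
  have hBvv : B.mulVec (wnext - wt) ⬝ᵥ (wnext - wt) = lam ^ 2 * c := by
    rw [hstep, mulVec_smul, smul_dotProduct, dotProduct_smul, hBu, ← hc_def, smul_eq_mul,
      smul_eq_mul]
    ring
  clear_value u c
  constructor
  · rw [hmv, hBvv, hlam]
    have hsq'c : Real.sqrt (1 - υ) ^ 2 * c = (1 - υ) * c := by rw [hsq]
    nlinarith [hsq'c, hftfs]
  · intro w hconstr
    obtain ⟨v, rfl⟩ : ∃ v, w = wt + v := ⟨w - wt, by ring⟩
    simp only [add_sub_cancel_left] at hconstr ⊢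
    rw [hBvv]
    set a : ℝ := m ⬝ᵥ v with ha
    set s2 : ℝ := B.mulVec v ⬝ᵥ v with hs2
    have hs2nn : 0 ≤ s2 := by
      rcases eq_or_ne v 0 with h | h
      · simp [hs2, h]
      · exact le_of_lt (by rw [hs2, dotProduct_comm]; exact hB.dotProduct_mulVec_pos h)
    -- Cauchy–Schwarz: a² ≤ c * s2
    have hCS : a ^ 2 ≤ c * s2 := by
      have hq : 0 ≤ B.mulVec (v - (a / c) • u) ⬝ᵥ (v - (a / c) • u) := by
        rcases eq_or_ne (v - (a / c) • u) 0 with h | h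
        · simp [h]
        · exact le_of_lt (by rw [dotProduct_comm]; exact hB.dotProduct_mulVec_pos h)
      have h1 : B.mulVec u ⬝ᵥ v = a := by rw [hBu, ha]
      have h2 : B.mulVec v ⬝ᵥ u = a := by
        rw [hsymm, hBu, dotProduct_comm, ← ha]
      have h3 : B.mulVec u ⬝ᵥ u = c := by rw [hBu, hc_def]
      have hexp : B.mulVec (v - (a / c) • u) ⬝ᵥ (v - (a / c) • u)
          = s2 - 2 * (a / c) * a + (a / c) ^ 2 * c := by
        simp only [mulVec_sub, mulVec_smul, sub_dotProduct, dotProduct_sub,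
          smul_dotProduct, dotProduct_smul, h1, h2, h3, smul_eq_mul]
        rw [← hs2]; ring
      rw [hexp] at hq
      have heq : s2 - 2 * (a / c) * a + (a / c) ^ 2 * c = s2 - a ^ 2 / c := by
        field_simp; ring
      rw [heq] at hq
      have := (div_le_iff₀ hc).mp (by linarith : a ^ 2 / c ≤ s2)
      linarith [this]
    clear_value a s2
    have hcon2 : c * υ / 2 + s2 / 2 ≤ -a := by linarith [hftfs, hconstr]
    have := sania_scalar_aux c υ s2 a hc hυ0 hυ1 hCS hs2nn hcon2
    rw [hlam]
    nlinarith [this]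
end

section
/- Define, for κ ∈ [0,1], C(κ) = f_t - f* - ((1-κ)/2)⟨g, ((1-κ)H + κI)⁻¹ g⟩ - (κ(1-κ)/2)‖((1-κ)H + κI)⁻¹ g‖². If H is symmetric positive definite, g ≠ 0, f_t ≥ f*, then C(1) = f_t - f* ≥ 0, and if additionally f_t - f* < (1/2)⟨g, H⁻¹g⟩ then C(0) < 0; hence by continuity there exists κ ∈ [0,1] with C(κ) = 0. -/
open Matrix

private lemma matA_posdef {d : ℕ} {H : Matrix (Fin d) (Fin d) ℝ}
    (hH : H.PosDef) {κ : ℝ} (h0 : 0 ≤ κ) (h1 : κ ≤ 1) :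
    ((1 - κ) • H + κ • (1 : Matrix (Fin d) (Fin d) ℝ)).PosDef := by
  rw [posDef_iff_dotProduct_mulVec]
  constructor
  · unfold Matrix.IsHermitian
    rw [conjTranspose_add, conjTranspose_smul, conjTranspose_smul,
      hH.isHermitian.eq, conjTranspose_one]
    simp
  · intro x hx
    have key : (star x) ⬝ᵥ (((1 - κ) • H + κ • (1 : Matrix (Fin d) (Fin d) ℝ)) *ᵥ x)
        = (1 - κ) * ((star x) ⬝ᵥ (H *ᵥ x)) + κ * ((star x) ⬝ᵥ x) := by
      rw [add_mulVec, dotProduct_add, smul_mulVec, smul_mulVec,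
        dotProduct_smul, dotProduct_smul, one_mulVec]
      simp [smul_eq_mul]
    rw [key]
    have hxx : 0 < (star x) ⬝ᵥ x := by
      simpa using dotProduct_star_self_pos_iff.mpr hx
    rcases lt_or_eq_of_le h1 with hlt | heq
    · have h1κ : 0 < 1 - κ := by linarith
      have := hH.dotProduct_mulVec_pos hx
      have h2 : 0 ≤ κ * ((star x) ⬝ᵥ x) := mul_nonneg h0 hxx.le
      nlinarith
    · subst heq; simpa using hxx

/-- The line-search function
`C(κ) = f_t - f* - ((1-κ)/2)⟨g, ((1-κ)H + κI)⁻¹g⟩ - (κ(1-κ)/2)‖((1-κ)H + κI)⁻¹g‖²`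
satisfies `C(1) = f_t - f* ≥ 0`, and if `f_t - f* < (1/2)⟨g, H⁻¹g⟩` then `C(0) < 0`, hence
there exists `κ ∈ [0,1]` with `C(κ) = 0`. -/
theorem cubic_newton_polyak_linesearch {d : ℕ} (H : Matrix (Fin d) (Fin d) ℝ)
    (hH : H.PosDef) (hHsymm : H.IsSymm) (g : Fin d → ℝ) (hg : g ≠ 0)
    (ft fstar : ℝ) (hge : fstar ≤ ft)
    (C : ℝ → ℝ)
    (hC : ∀ κ : ℝ, C κ =
      ft - fstar
        - ((1 - κ) / 2) * (g ⬝ᵥ ((1 - κ) • H + κ • (1 : Matrix (Fin d) (Fin d) ℝ))⁻¹.mulVec g)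
        - (κ * (1 - κ) / 2) *
            (((1 - κ) • H + κ • (1 : Matrix (Fin d) (Fin d) ℝ))⁻¹.mulVec g ⬝ᵥ
              ((1 - κ) • H + κ • (1 : Matrix (Fin d) (Fin d) ℝ))⁻¹.mulVec g)) :
    C 1 = ft - fstar ∧ 0 ≤ C 1 ∧
      (ft - fstar < (1 / 2) * (g ⬝ᵥ H⁻¹.mulVec g) →
        C 0 < 0 ∧ ∃ κ ∈ Set.Icc (0 : ℝ) 1, C κ = 0) := by
  set A : ℝ → Matrix (Fin d) (Fin d) ℝ :=
    fun κ => (1 - κ) • H + κ • (1 : Matrix (Fin d) (Fin d) ℝ) with hA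
  have hC1 : C 1 = ft - fstar := by rw [hC 1]; ring
  have hA0 : A 0 = H := by simp [hA]
  have hC0 : C 0 = ft - fstar - (1 / 2) * (g ⬝ᵥ H⁻¹.mulVec g) := by
    rw [hC 0]
    norm_num
  refine ⟨hC1, by linarith, fun hlt => ?_⟩
  have hC0neg : C 0 < 0 := by rw [hC0]; linarith
  refine ⟨hC0neg, ?_⟩
  -- continuity of C on [0,1]
  have hdet : ∀ κ ∈ Set.Icc (0:ℝ) 1, (A κ).det ≠ 0 := fun κ hκ =>
    (matA_posdef hH hκ.1 hκ.2).det_pos.ne'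
  have hAcont : Continuous A := by
    apply Continuous.add
    · exact (continuous_const.sub continuous_id).smul continuous_const
    · exact continuous_id.smul continuous_const
  have hinv : ContinuousOn (fun κ => (A κ)⁻¹) (Set.Icc (0:ℝ) 1) := by
    have heq : ∀ κ, (A κ)⁻¹ = (A κ).det⁻¹ • (A κ).adjugate := by
      intro κ
      rw [Matrix.inv_def, Ring.inverse_eq_inv']
    simp only [heq]
    apply ContinuousOn.smul (f := fun κ => (A κ).det⁻¹) (g := fun κ => (A κ).adjugate)
    · exact (hAcont.matrix_det.continuousOn).inv₀ hdet
    · exact hAcont.matrix_adjugate.continuousOn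
  have hentry : ∀ i j, ContinuousOn (fun κ => (A κ)⁻¹ i j) (Set.Icc (0:ℝ) 1) :=
    fun i j => by
      have h := ((continuous_apply j).comp (continuous_apply i)).comp_continuousOn hinv
      exact h
  have hmvC : ∀ i, ContinuousOn (fun κ => ((A κ)⁻¹ *ᵥ g) i) (Set.Icc (0:ℝ) 1) := by
    intro i
    simp only [mulVec, dotProduct]
    exact continuousOn_finset_sum _ fun j _ => (hentry i j).mul continuousOn_const
  have hdp1 : ContinuousOn (fun κ => g ⬝ᵥ (A κ)⁻¹.mulVec g) (Set.Icc (0:ℝ) 1) := by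
    simp only [dotProduct]
    exact continuousOn_finset_sum _ fun i _ => continuousOn_const.mul (hmvC i)
  have hdp2 : ContinuousOn (fun κ => (A κ)⁻¹.mulVec g ⬝ᵥ (A κ)⁻¹.mulVec g)
      (Set.Icc (0:ℝ) 1) := by
    simp only [dotProduct]
    exact continuousOn_finset_sum _ fun i _ => (hmvC i).mul (hmvC i)
  have hCcont : ContinuousOn C (Set.Icc (0:ℝ) 1) := by
    have hfun : C = fun κ =>
        ft - fstar - ((1 - κ) / 2) * (g ⬝ᵥ (A κ)⁻¹.mulVec g)
          - (κ * (1 - κ) / 2) * ((A κ)⁻¹.mulVec g ⬝ᵥ (A κ)⁻¹.mulVec g) :=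
      funext fun κ => hC κ
    rw [hfun]
    refine ContinuousOn.sub (ContinuousOn.sub continuousOn_const ?_) ?_
    · exact ((continuousOn_const.sub continuousOn_id).div_const 2).mul hdp1
    · exact ((continuousOn_id.mul (continuousOn_const.sub continuousOn_id)).div_const 2).mul hdp2
  have := intermediate_value_Icc (by norm_num : (0:ℝ) ≤ 1) hCcont
  have h0mem : (0:ℝ) ∈ Set.Icc (C 0) (C 1) := ⟨hC0neg.le, by linarith⟩
  obtain ⟨κ, hκ, hκ0⟩ := this h0mem
  exact ⟨κ, hκ, hκ0⟩
end

section
/- Let f be twice continuously differentiable with positive definite Hessians along iterates, A invertible, φ(y) = f(Ay), and f* = f(x*) the common minimal value. For the damped Newton iterations x_{k+1} = x_k - λ_k[∇²f(x_k)]⁻¹∇f(x_k) and y_{k+1} = y_k - λ̂_k[∇²φ(y_k)]⁻¹∇φ(y_k), where λ_k is computed by the SANIA rule from υ_k = 2(f(x_k) - f*)/⟨∇f(x_k), [∇²f(x_k)]⁻¹∇f(x_k)⟩ (λ_k = 1 - √(1 - υ_k) if υ_k ≤ 1, else 1) and λ̂_k analogously from φ, with y_0 = A⁻¹x_0: then λ̂_k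 = λ_k and y_k = A⁻¹x_k for all k. -/
open Matrix
open scoped RealInnerProductSpace

section Aux

variable {d : ℕ}

local notation "CL" => Matrix.toEuclideanCLM (𝕜 := ℝ) (n := Fin d)

/-- The gradient of `φ = f ∘ A` is `Aᵀ ∇f(A·)`. -/
lemma sania_gradient_comp (f φ : EuclideanSpace ℝ (Fin d) → ℝ)
    (hdiff : Differentiable ℝ f) (A : Matrix (Fin d) (Fin d) ℝ)
    (hφ : φ = fun y => f (CL A y)) (v : EuclideanSpace ℝ (Fin d)) :
    gradient φ v = CL (star A) (gradient f (CL A v)) := by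
  have h1 : HasFDerivAt φ
      (((InnerProductSpace.toDual ℝ _) (gradient f (CL A v))).comp (CL A)) v := by
    rw [hφ]
    exact ((hdiff (CL A v)).hasGradientAt.hasFDerivAt).comp v (CL A).hasFDerivAt
  have h2 := h1.hasGradientAt
  rw [h2.gradient]
  apply ext_inner_right ℝ
  intro w
  rw [InnerProductSpace.toDual_symm_apply]
  have hadj : CL (star A) = ContinuousLinearMap.adjoint (CL A) := by
    rw [map_star, ContinuousLinearMap.star_eq_adjoint]
  rw [hadj, ContinuousLinearMap.adjoint_inner_left]
  simp

end Aux

/-- SANIA (damped) Newton is affine invariant: with `φ(y) = f(Ay)`, the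
SANIA step-sizes agree (`λ̂_k = λ_k`) and the iterates satisfy `y_k = A⁻¹ x_k`. -/
theorem sania_newton_affine_invariant {d : ℕ} (f φ : EuclideanSpace ℝ (Fin d) → ℝ)
    (hf : ContDiff ℝ 2 f)
    (A : Matrix (Fin d) (Fin d) ℝ) (hA : IsUnit A.det)
    (hφ : φ = fun y => f (Matrix.toEuclideanCLM (𝕜 := ℝ) A y))
    (xstar : EuclideanSpace ℝ (Fin d)) (hmin : ∀ w, f xstar ≤ f w)
    (fstar : ℝ) (hfstar : fstar = f xstar)
    (Hf Hφ : EuclideanSpace ℝ (Fin d) → Matrix (Fin d) (Fin d) ℝ)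
    (hHf : ∀ x, HasFDerivAt (gradient f) (Matrix.toEuclideanCLM (𝕜 := ℝ) (Hf x)) x)
    (hHφ : ∀ y, HasFDerivAt (gradient φ) (Matrix.toEuclideanCLM (𝕜 := ℝ) (Hφ y)) y)
    (x y : ℕ → EuclideanSpace ℝ (Fin d))
    (hposf : ∀ k, (Hf (x k)).PosDef) (hposφ : ∀ k, (Hφ (y k)).PosDef)
    (υf υφ lamf lamφ : ℕ → ℝ)
    (hυf : ∀ k, υf k = 2 * (f (x k) - fstar) /
      ⟪gradient f (x k), Matrix.toEuclideanCLM (𝕜 := ℝ) (Hf (x k))⁻¹ (gradient f (x k))⟫)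
    (hυφ : ∀ k, υφ k = 2 * (φ (y k) - fstar) /
      ⟪gradient φ (y k), Matrix.toEuclideanCLM (𝕜 := ℝ) (Hφ (y k))⁻¹ (gradient φ (y k))⟫)
    (hlamf : ∀ k, lamf k = if υf k ≤ 1 then 1 - Real.sqrt (1 - υf k) else 1)
    (hlamφ : ∀ k, lamφ k = if υφ k ≤ 1 then 1 - Real.sqrt (1 - υφ k) else 1)
    (hx : ∀ k, x (k + 1)
      = x k - lamf k • Matrix.toEuclideanCLM (𝕜 := ℝ) (Hf (x k))⁻¹ (gradient f (x k)))
    (hy : ∀ k, y (k + 1)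
      = y k - lamφ k • Matrix.toEuclideanCLM (𝕜 := ℝ) (Hφ (y k))⁻¹ (gradient φ (y k)))
    (h0 : y 0 = Matrix.toEuclideanCLM (𝕜 := ℝ) A⁻¹ (x 0)) :
    ∀ k, lamφ k = lamf k ∧ y k = Matrix.toEuclideanCLM (𝕜 := ℝ) A⁻¹ (x k) := by
  have hdiff : Differentiable ℝ f := hf.differentiable (by norm_num)
  have hAA : A * A⁻¹ = 1 := Matrix.mul_nonsing_inv A hA
  have hAs : IsUnit (star A).det := by
    rw [Matrix.star_eq_conjTranspose, Matrix.det_conjTranspose]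
    exact hA.star
  have hsAA : (star A)⁻¹ * star A = 1 := Matrix.nonsing_inv_mul _ hAs
  set CL := Matrix.toEuclideanCLM (𝕜 := ℝ) (n := Fin d) with hCL
  have hgradφ : ∀ v, gradient φ v = CL (star A) (gradient f (CL A v)) :=
    sania_gradient_comp f φ hdiff A hφ
  -- Hessian of φ
  have hHess : ∀ v, Hφ v = star A * Hf (CL A v) * A := by
    intro v
    have hdg : Differentiable ℝ (gradient f) := fun w => (hHf w).differentiableAt
    have h2 : HasFDerivAt (gradient φ)
        ((CL (star A)).comp ((CL (Hf (CL A v))).comp (CL A))) v := by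
      have h3 : HasFDerivAt (fun w => CL (star A) (gradient f (CL A w)))
          ((CL (star A)).comp ((CL (Hf (CL A v))).comp (CL A))) v := by
        exact (CL (star A)).hasFDerivAt.comp v ((hHf (CL A v)).comp v (CL A).hasFDerivAt)
      have : gradient φ = fun w => CL (star A) (gradient f (CL A w)) := funext hgradφ
      rw [this]
      exact h3
    have h4 := (hHφ v).unique h2
    rw [hCL] at h4
    have h5 : Matrix.toEuclideanCLM (𝕜 := ℝ) (star A * Hf (CL A v) * A)
        = Matrix.toEuclideanCLM (𝕜 := ℝ) (Hφ v) := by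
      rw [_root_.map_mul, _root_.map_mul, h4, mul_assoc]
      rfl
    exact ((Matrix.toEuclideanCLM (𝕜 := ℝ) (n := Fin d)).injective h5).symm
  -- key per-step lemma
  have key : ∀ k, y k = CL A⁻¹ (x k) →
      lamφ k = lamf k ∧
      CL (Hφ (y k))⁻¹ (gradient φ (y k)) = CL A⁻¹ (CL (Hf (x k))⁻¹ (gradient f (x k))) := by
    intro k hyk
    have hLy : CL A (y k) = x k := by
      rw [hyk, ← ContinuousLinearMap.mul_apply, ← _root_.map_mul, hAA, _root_.map_one,
        ContinuousLinearMap.one_apply]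
    have hg : gradient φ (y k) = CL (star A) (gradient f (x k)) := by
      rw [hgradφ, hLy]
    have hH : Hφ (y k) = star A * Hf (x k) * A := by rw [hHess, hLy]
    have hval : φ (y k) = f (x k) := by rw [hφ]; simp only; rw [hLy]
    have hinv : (star A * Hf (x k) * A)⁻¹ = A⁻¹ * ((Hf (x k))⁻¹ * (star A)⁻¹) := by
      rw [Matrix.mul_inv_rev, Matrix.mul_inv_rev]
    have hadj : CL (star A) = ContinuousLinearMap.adjoint (CL A) := by
      rw [map_star, ContinuousLinearMap.star_eq_adjoint]
    have hstep : CL (Hφ (y k))⁻¹ (gradient φ (y k))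
        = CL A⁻¹ (CL (Hf (x k))⁻¹ (gradient f (x k))) := by
      rw [hH, hg, hinv, ← ContinuousLinearMap.mul_apply, ← _root_.map_mul,
        mul_assoc, mul_assoc, hsAA, mul_one, _root_.map_mul,
        ContinuousLinearMap.mul_apply]
    have hinner : ⟪gradient φ (y k), CL (Hφ (y k))⁻¹ (gradient φ (y k))⟫
        = ⟪gradient f (x k), CL (Hf (x k))⁻¹ (gradient f (x k))⟫ := by
      rw [hstep, hg, hadj, ContinuousLinearMap.adjoint_inner_left,
        ← ContinuousLinearMap.mul_apply, ← _root_.map_mul, hAA, _root_.map_one,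
        ContinuousLinearMap.one_apply]
    have hυ : υφ k = υf k := by rw [hυφ, hυf, hval, hinner]
    have hlam : lamφ k = lamf k := by rw [hlamφ, hlamf, hυ]
    exact ⟨hlam, hstep⟩
  have hyk : ∀ k, y k = CL A⁻¹ (x k) := by
    intro k
    induction k with
    | zero => exact h0
    | succ n ih =>
        obtain ⟨hlam, hstep⟩ := key n ih
        rw [hy, hx, hlam, hstep, ih, ← _root_.map_smul, ← _root_.map_sub]
  exact fun k => ⟨(key k (hyk k)).1, hyk k⟩
end

section
/- Let V ∈ ℝ^{d×d} be an invertible diagonal matrix, f_j: ℝ^d → ℝ differentiable, φ_j(y) = f_j(Vy). For the AdaGrad-SQR iteration x_{k+1} = x_k - λ_k B_k⁻¹ g_k with g_k = ∇f_{i_k}(x_k), B_k = diag(∑_{j≤k} g_j²), λ_k the SANIA step-size from υ_k = 2(f_{i_k}(x_k) - f*)/⟨g_k, B_k⁻¹g_k⟩, and the analogous iteration for φ started at y_0 = V⁻¹x_0, we have ĝ_k = Vᵀg_k, B̂_k = VᵀB_kV, υ̂_k = υ_k, and y_k = V⁻¹x_k for all k. -/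
open Matrix
open scoped RealInnerProductSpace

lemma aux_gradient_comp {E : Type*} [NormedAddCommGroup E] [InnerProductSpace ℝ E]
    [CompleteSpace E] {f : E → ℝ} (hf : Differentiable ℝ f) (A : E →L[ℝ] E) (z : E) :
    gradient (fun y => f (A y)) z = ContinuousLinearMap.adjoint A (gradient f (A z)) := by
  have hfd : fderiv ℝ (fun y => f (A y)) z = (fderiv ℝ f (A z)).comp A := by
    have := fderiv_comp z (hf (A z)) A.differentiableAt
    rw [A.fderiv] at this; exact this
  apply ext_inner_right ℝ
  intro v
  rw [ContinuousLinearMap.adjoint_inner_left]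
  unfold gradient
  rw [InnerProductSpace.toDual_symm_apply, InnerProductSpace.toDual_symm_apply, hfd]
  rfl

/-- Scale invariance of SANIA AdaGrad-SQR: for an invertible diagonal `V`
and `φ_j(y) = f_j(Vy)`, the transformed iteration satisfies `ĝ_k = Vᵀg_k`,
`B̂_k = VᵀB_kV`, `υ̂_k = υ_k`, and `y_k = V⁻¹x_k` for all `k`. -/
theorem sania_adagrad_sqr_scale_invariant {d : ℕ} {ι : Type*}
    (fs φs : ι → EuclideanSpace ℝ (Fin d) → ℝ) (hdiff : ∀ j, Differentiable ℝ (fs j))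
    (V : Matrix (Fin d) (Fin d) ℝ) (hVdiag : V.IsDiag) (hV : IsUnit V.det)
    (hφs : ∀ j, φs j = fun y => fs j (Matrix.toEuclideanCLM (𝕜 := ℝ) V y))
    (fstar : ℝ) (idx : ℕ → ι)
    (x y : ℕ → EuclideanSpace ℝ (Fin d))
    (g ghat : ℕ → EuclideanSpace ℝ (Fin d))
    (hg : ∀ k, g k = gradient (fs (idx k)) (x k))
    (hghat : ∀ k, ghat k = gradient (φs (idx k)) (y k))
    (B Bhat : ℕ → Matrix (Fin d) (Fin d) ℝ)
    (hB : ∀ k, B k = Matrix.diagonal fun i => ∑ j ∈ Finset.range (k + 1), g j i ^ 2)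
    (hBhat : ∀ k, Bhat k = Matrix.diagonal fun i => ∑ j ∈ Finset.range (k + 1), ghat j i ^ 2)
    (υ υhat lam lamhat : ℕ → ℝ)
    (hυ : ∀ k, υ k = 2 * (fs (idx k) (x k) - fstar) /
      ⟪g k, Matrix.toEuclideanCLM (𝕜 := ℝ) (B k)⁻¹ (g k)⟫)
    (hυhat : ∀ k, υhat k = 2 * (φs (idx k) (y k) - fstar) /
      ⟪ghat k, Matrix.toEuclideanCLM (𝕜 := ℝ) (Bhat k)⁻¹ (ghat k)⟫)
    (hlam : ∀ k, lam k = if υ k ≤ 1 then 1 - Real.sqrt (1 - υ k) else 1)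
    (hlamhat : ∀ k, lamhat k = if υhat k ≤ 1 then 1 - Real.sqrt (1 - υhat k) else 1)
    (hx : ∀ k, x (k + 1) = x k - lam k • Matrix.toEuclideanCLM (𝕜 := ℝ) (B k)⁻¹ (g k))
    (hy : ∀ k, y (k + 1)
      = y k - lamhat k • Matrix.toEuclideanCLM (𝕜 := ℝ) (Bhat k)⁻¹ (ghat k))
    (h0 : y 0 = Matrix.toEuclideanCLM (𝕜 := ℝ) V⁻¹ (x 0)) :
    ∀ k, ghat k = Matrix.toEuclideanCLM (𝕜 := ℝ) Vᵀ (g k) ∧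
      Bhat k = Vᵀ * B k * V ∧ υhat k = υ k ∧
      y k = Matrix.toEuclideanCLM (𝕜 := ℝ) V⁻¹ (x k) := by
  classical
  have hVT : Vᵀ = V := hVdiag.isSymm
  have hVinv : V⁻¹ * V = 1 := V.nonsing_inv_mul hV
  have hVinv' : V * V⁻¹ = 1 := V.mul_nonsing_inv hV
  have hTmul : ∀ (M N : Matrix (Fin d) (Fin d) ℝ) (v : EuclideanSpace ℝ (Fin d)),
      Matrix.toEuclideanCLM (𝕜 := ℝ) (M * N) v
        = Matrix.toEuclideanCLM (𝕜 := ℝ) M (Matrix.toEuclideanCLM (𝕜 := ℝ) N v) := by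
    intro M N v; rw [_root_.map_mul]; rfl
  have hTone : ∀ v : EuclideanSpace ℝ (Fin d),
      Matrix.toEuclideanCLM (𝕜 := ℝ) (1 : Matrix (Fin d) (Fin d) ℝ) v = v := by
    intro v; rw [_root_.map_one]; rfl
  have hTadj : ∀ M : Matrix (Fin d) (Fin d) ℝ, Matrix.toEuclideanCLM (𝕜 := ℝ) Mᵀ
      = ContinuousLinearMap.adjoint (Matrix.toEuclideanCLM (𝕜 := ℝ) M) := by
    intro M
    have h : Mᵀ = star M := by
      rw [Matrix.star_eq_conjTranspose, Matrix.conjTranspose_eq_transpose_of_trivial]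
    rw [h, map_star, ContinuousLinearMap.star_eq_adjoint]
  have hVy : ∀ k, y k = Matrix.toEuclideanCLM (𝕜 := ℝ) V⁻¹ (x k) →
      Matrix.toEuclideanCLM (𝕜 := ℝ) V (y k) = x k := by
    intro k hk; rw [hk, ← hTmul, hVinv', hTone]
  have hghat_of : ∀ k, y k = Matrix.toEuclideanCLM (𝕜 := ℝ) V⁻¹ (x k) →
      ghat k = Matrix.toEuclideanCLM (𝕜 := ℝ) Vᵀ (g k) := by
    intro k hk
    rw [hghat k]
    simp only [hφs]
    rw [aux_gradient_comp (hdiff (idx k)) _ (y k), hVy k hk, ← hg k, ← hTadj]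
  have hφval : ∀ k, y k = Matrix.toEuclideanCLM (𝕜 := ℝ) V⁻¹ (x k) →
      φs (idx k) (y k) = fs (idx k) (x k) := by
    intro k hk
    simp only [hφs]
    rw [hVy k hk]
  have happly : ∀ (w : Fin d → ℝ) (v : EuclideanSpace ℝ (Fin d)) (i : Fin d),
      (Matrix.toEuclideanCLM (𝕜 := ℝ) (Matrix.diagonal w) v) i = w i * v i := by
    intro w v i
    show (Matrix.diagonal w *ᵥ ⇑v) i = _
    rw [Matrix.mulVec_diagonal]
  have hBhat_of : ∀ k, (∀ j, j ≤ k → ghat j = Matrix.toEuclideanCLM (𝕜 := ℝ) Vᵀ (g j)) →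
      Bhat k = Vᵀ * B k * V := by
    intro k hj
    have hco : ∀ j, j ≤ k → ∀ i, ghat j i = V.diag i * g j i := by
      intro j hjk i
      rw [hj j hjk, hVT]
      conv_lhs => rw [← hVdiag.diagonal_diag]
      exact happly _ _ _
    rw [hBhat, hB, hVT]
    conv_rhs => rw [← hVdiag.diagonal_diag]
    rw [Matrix.diagonal_mul_diagonal, Matrix.diagonal_mul_diagonal,
      Matrix.diagonal_eq_diagonal_iff]
    intro i
    simp only [Pi.mul_apply]
    calc ∑ j ∈ Finset.range (k + 1), ghat j i ^ 2
        = ∑ j ∈ Finset.range (k + 1), V.diag i ^ 2 * g j i ^ 2 := by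
          refine Finset.sum_congr rfl fun j hjm => ?_
          rw [hco j (Nat.lt_succ_iff.mp (Finset.mem_range.mp hjm)) i]; ring
      _ = V.diag i * (∑ j ∈ Finset.range (k + 1), g j i ^ 2) * V.diag i := by
          rw [← Finset.mul_sum]; ring
  have main : ∀ k, (∀ j, j ≤ k → y j = Matrix.toEuclideanCLM (𝕜 := ℝ) V⁻¹ (x j)) →
      ghat k = Matrix.toEuclideanCLM (𝕜 := ℝ) Vᵀ (g k) ∧
      Bhat k = Vᵀ * B k * V ∧ υhat k = υ k ∧
      Matrix.toEuclideanCLM (𝕜 := ℝ) (Bhat k)⁻¹ (ghat k)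
        = Matrix.toEuclideanCLM (𝕜 := ℝ) V⁻¹
            (Matrix.toEuclideanCLM (𝕜 := ℝ) (B k)⁻¹ (g k)) := by
    intro k hall
    have hyk := hall k le_rfl
    have hg' := hghat_of k hyk
    have hB' := hBhat_of k fun j hjk => hghat_of j (hall j hjk)
    have hBinv : (Bhat k)⁻¹ = V⁻¹ * ((B k)⁻¹ * V⁻¹) := by
      rw [hB', hVT, Matrix.mul_inv_rev, Matrix.mul_inv_rev]
    have happ : Matrix.toEuclideanCLM (𝕜 := ℝ) (Bhat k)⁻¹ (ghat k)
        = Matrix.toEuclideanCLM (𝕜 := ℝ) V⁻¹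
            (Matrix.toEuclideanCLM (𝕜 := ℝ) (B k)⁻¹ (g k)) := by
      rw [hg', hVT, hBinv, hTmul, hTmul, ← hTmul V⁻¹ V, hVinv, hTone]
    have hsa : ContinuousLinearMap.adjoint (Matrix.toEuclideanCLM (𝕜 := ℝ) V)
        = Matrix.toEuclideanCLM (𝕜 := ℝ) V := by rw [← hTadj, hVT]
    have hinner : ⟪ghat k, Matrix.toEuclideanCLM (𝕜 := ℝ) (Bhat k)⁻¹ (ghat k)⟫
        = ⟪g k, Matrix.toEuclideanCLM (𝕜 := ℝ) (B k)⁻¹ (g k)⟫ := by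
      calc ⟪ghat k, Matrix.toEuclideanCLM (𝕜 := ℝ) (Bhat k)⁻¹ (ghat k)⟫
          = ⟪Matrix.toEuclideanCLM (𝕜 := ℝ) V (g k), Matrix.toEuclideanCLM (𝕜 := ℝ) V⁻¹
              (Matrix.toEuclideanCLM (𝕜 := ℝ) (B k)⁻¹ (g k))⟫ := by rw [happ, hg', hVT]
        _ = ⟪g k, Matrix.toEuclideanCLM (𝕜 := ℝ) V (Matrix.toEuclideanCLM (𝕜 := ℝ) V⁻¹
              (Matrix.toEuclideanCLM (𝕜 := ℝ) (B k)⁻¹ (g k)))⟫ := by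
            conv_lhs => rw [← hsa]
            rw [ContinuousLinearMap.adjoint_inner_left]
        _ = ⟪g k, Matrix.toEuclideanCLM (𝕜 := ℝ) (B k)⁻¹ (g k)⟫ := by
            rw [← hTmul, hVinv', hTone]
    have hυ' : υhat k = υ k := by rw [hυhat, hυ, hinner, hφval k hyk]
    exact ⟨hg', hB', hυ', happ⟩
  have hyx : ∀ k, y k = Matrix.toEuclideanCLM (𝕜 := ℝ) V⁻¹ (x k) := by
    intro k
    induction k using Nat.strong_induction_on with
    | _ k ih =>
      match k with
      | 0 => exact h0
      | Nat.succ n =>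
        have hall : ∀ j, j ≤ n → y j = Matrix.toEuclideanCLM (𝕜 := ℝ) V⁻¹ (x j) :=
          fun j hj => ih j (Nat.lt_succ_of_le hj)
        obtain ⟨hg', hB', hυ', happ⟩ := main n hall
        have hlam' : lamhat n = lam n := by rw [hlamhat, hlam, hυ']
        rw [hy n, hx n, happ, hlam', hall n le_rfl, map_sub, _root_.map_smul]
  intro k
  obtain ⟨hg', hB', hυ', _⟩ := main k fun j _ => hyx j
  exact ⟨hg', hB', hυ', hyx k⟩
end
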